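/- Define S_m = D_{m+1} − D_m. Then for every m ≥ p and every k with 0 < k < p−1: S_{pm+k} = S_{p(p−1−S_m)+k}. -/

import Mathlib

open MeasureTheory
open scoped NNReal ENNReal

namespace Chacon

/-- The space of digit sequences with digits in `{0, …, p-1}`. -/
def Gamma (p : ℕ) : Set (ℕ → ℕ) := {x | ∀ i, x i < p}

/-- `Γ*`: sequences with digits `< p` having infinitely many coordinates `≠ p - 1`. -/
def GammaStar (p : ℕ) : Set (ℕ → ℕ) :=
  {x | (∀ i, x i < p) ∧ {i | x i ≠ p - 1}.Infinite}

/-- The least index `i` with `x i ≠ p - 1`. -/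
noncomputable def firstNot (p : ℕ) (x : ℕ → ℕ) : ℕ :=
  sInf {i | x i ≠ p - 1}

/-- `φ(x) = x_i` where `i` is the least index with `x_i ≠ p - 1`. -/
noncomputable def phi (p : ℕ) (x : ℕ → ℕ) : ℕ :=
  x (firstNot p x)

/-- The odometer `S` (addition of `1` with carry): the initial run of digits
`p - 1` is replaced by zeros, and the first digit `≠ p - 1` is increased by one. -/
noncomputable def odo (p : ℕ) (x : ℕ → ℕ) : ℕ → ℕ :=
  fun i =>
    if i < firstNot p x then 0
    else if i = firstNot p x then x i + 1
    else x i

/-- `φ^(m)(x) = ∑_{j=0}^{m-1} φ(S^j x)`. -/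
noncomputable def phiSum (p m : ℕ) (x : ℕ → ℕ) : ℕ :=
  ∑ j ∈ Finset.range m, phi p ((odo p)^[j] x)

/-- The base-`p` digit sequence of a real number `u`. -/
noncomputable def digitsOf (p : ℕ) (u : ℝ) : ℕ → ℕ :=
  fun i => (⌊u * (p : ℝ) ^ (i + 1)⌋).toNat % p

/-- `λ`: the product probability measure on digit sequences under which the
coordinates are i.i.d., uniformly distributed in `{0, …, p-1}`; it is realized
concretely as the distribution of the base-`p` digit sequence of a uniformly
distributed random point of `[0,1)`. -/
noncomputable def lam (p : ℕ) : Measure (ℕ → ℕ) :=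
  Measure.map (digitsOf p) (volume.restrict (Set.Ico (0 : ℝ) 1))

/-- `π_m(j) = λ({x : φ^(m)(x) = j})`. -/
noncomputable def pim (p m j : ℕ) : ℝ≥0∞ :=
  lam p {x | phiSum p m x = j}

/-- `P_m^p(t) = ∑_{j ≥ 0} π_m(j) t^j`, a real polynomial
(the sum is over `0 ≤ j ≤ m (p-2)` since `0 ≤ φ^(m) ≤ m (p-2)` a.s.). -/
noncomputable def P (p m : ℕ) (t : ℝ) : ℝ :=
  ∑ j ∈ Finset.range (m * (p - 2) + 1), (pim p m j).toReal * t ^ j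

/-- The `n`-th triangular number `Δ_n = n (n+1) / 2`. -/
def tri (n : ℕ) : ℕ := n * (n + 1) / 2

/-- The degree `D_m` of `P_m^p`: the largest `j` with `π_m(j) ≠ 0`. -/
noncomputable def D (p m : ℕ) : ℕ := sSup {j | pim p m j ≠ 0}

/-- The lower degree `d_m` of `P_m^p`: the least `j` with `π_m(j) ≠ 0`. -/
noncomputable def d (p m : ℕ) : ℕ := sInf {j | pim p m j ≠ 0}


/-- `S_m = D_{m+1} - D_m`. -/
noncomputable def Sseq (p m : ℕ) : ℕ := D p (m + 1) - D p m

/-!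
While `n + 1 < p ^ L`, on the cylinder of sequences beginning with the first `L` base-`p` digits
of `n` (least significant first) the odometer acts as `n ↦ n + 1` and `φ` takes the value `φ(n)`,
the first digit of `n` different from `p - 1`. Every sequence of `Γ*` lies in such cylinders for
arbitrarily large `L`, `λ(Γ*) = 1`, and every cylinder has positive measure; so the values of
`φ^(m)` of positive probability are exactly the sums `φ(a) + ⋯ + φ(a + m - 1)`, and `D_m` is
their maximum over `a`.

Splitting a window `[a, a + pm + k)` according to last digits gives
`D_{pm+k} = m T + D_m + R_k(S_m)` with `T = 0 + 1 + ⋯ + (p - 2)` and `R_k(s)` depending only on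
`k` and `s`; hence `S_{pm+k} = R_{k+1}(S_m) - R_k(S_m)`. Evaluating at `m = 0` gives
`S_j = p - 1 - j` for `0 < j < p`, so `S_{p-1-S_m} = S_m`, and the two sides agree.
-/

section

variable {p : ℕ}

def digitSeq (p n : ℕ) : ℕ → ℕ := fun j => n / p ^ j % p

lemma digitSeq_zero (n : ℕ) : digitSeq p n 0 = n % p := by
  simp [digitSeq]

lemma digitSeq_succ (n j : ℕ) : digitSeq p n (j + 1) = digitSeq p (n / p) j := by
  simp [digitSeq, pow_succ', Nat.div_div_eq_div_mul]

lemma exists_digitSeq_ne (hp : 2 ≤ p) (n : ℕ) : ∃ j, digitSeq p n j ≠ p - 1 := by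
  refine ⟨n, ?_⟩
  rw [digitSeq, Nat.div_eq_of_lt (Nat.lt_pow_self (by omega)), Nat.zero_mod]
  omega

lemma succ_div_mod_of_mod_ne {n : ℕ} (hp : 0 < p) (h : n % p ≠ p - 1) :
    (n + 1) / p = n / p ∧ (n + 1) % p = n % p + 1 := by
  have := Nat.div_add_mod n p
  have := Nat.mod_lt n hp
  exact (Nat.div_mod_unique hp).2 ⟨by omega, by omega⟩

lemma succ_div_mod_of_mod_eq {n : ℕ} (hp : 0 < p) (h : n % p = p - 1) :
    (n + 1) / p = n / p + 1 ∧ (n + 1) % p = 0 := by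
  have := Nat.div_add_mod n p
  exact (Nat.div_mod_unique hp).2 ⟨by rw [Nat.mul_add]; omega, hp⟩

section FirstNot

variable {x : ℕ → ℕ}

lemma firstNot_eq_zero (h : x 0 ≠ p - 1) : firstNot p x = 0 :=
  Nat.sInf_eq_zero.2 (Or.inl h)

lemma firstNot_eq_succ (h0 : x 0 = p - 1) (hx : ∃ j, x j ≠ p - 1) :
    firstNot p x = firstNot p (fun j => x (j + 1)) + 1 := by
  refine (Nat.sInf_add (p := fun i => x i ≠ p - 1) ?_).symm
  refine Nat.one_le_iff_ne_zero.2 fun h => ?_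
  rcases Nat.sInf_eq_zero.1 h with h | h
  · exact h h0
  · exact Set.eq_empty_iff_forall_notMem.1 h hx.choose hx.choose_spec

lemma phi_of_ne (h : x 0 ≠ p - 1) : phi p x = x 0 := by
  rw [phi, firstNot_eq_zero h]

lemma phi_of_eq (h0 : x 0 = p - 1) (hx : ∃ j, x j ≠ p - 1) :
    phi p x = phi p (fun j => x (j + 1)) := by
  rw [phi, phi, firstNot_eq_succ h0 hx]

lemma odo_of_ne (h : x 0 ≠ p - 1) (j : ℕ) :
    odo p x j = if j = 0 then x 0 + 1 else x j := by
  simp only [odo, firstNot_eq_zero h, Nat.not_lt_zero, if_false]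
  split_ifs <;> simp_all

lemma odo_of_eq (h0 : x 0 = p - 1) (hx : ∃ j, x j ≠ p - 1) (j : ℕ) :
    odo p x j = if j = 0 then 0 else odo p (fun j => x (j + 1)) (j - 1) := by
  rcases j with _ | j <;> simp [odo, firstNot_eq_succ h0 hx]

end FirstNot

lemma odo_digitSeq (hp : 2 ≤ p) (n : ℕ) : odo p (digitSeq p n) = digitSeq p (n + 1) := by
  induction n using Nat.strong_induction_on with
  | _ n ih =>
    funext j
    by_cases h : n % p = p - 1
    · obtain ⟨hdiv, hmod⟩ := succ_div_mod_of_mod_eq (by omega) h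
      have hlt : n / p < n := Nat.div_lt_self (by have := Nat.mod_le n p; omega) (by omega)
      rw [odo_of_eq (by rwa [digitSeq_zero]) (exists_digitSeq_ne hp n),
        show (fun j => digitSeq p n (j + 1)) = digitSeq p (n / p) from funext (digitSeq_succ n),
        ih _ hlt]
      rcases j with _ | j
      · simp [digitSeq_zero, hmod]
      · simp [digitSeq_succ, hdiv]
    · obtain ⟨hdiv, hmod⟩ := succ_div_mod_of_mod_ne (by omega) h
      rw [odo_of_ne (by rwa [digitSeq_zero])]
      rcases j with _ | j
      · simp [digitSeq_zero, hmod]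
      · simp [digitSeq_succ, hdiv]

lemma iterate_odo_digitSeq (hp : 2 ≤ p) (n t : ℕ) :
    (odo p)^[t] (digitSeq p n) = digitSeq p (n + t) := by
  induction t with
  | zero => rfl
  | succ t ih => rw [Function.iterate_succ_apply', ih, odo_digitSeq hp, Nat.add_assoc]

noncomputable def phiNat (p n : ℕ) : ℕ := phi p (digitSeq p n)

lemma phiNat_of_mod_ne {n : ℕ} (h : n % p ≠ p - 1) : phiNat p n = n % p := by
  rw [phiNat, phi_of_ne (by rwa [digitSeq_zero]), digitSeq_zero]

lemma phiNat_of_mod_eq {n : ℕ} (hp : 2 ≤ p) (h : n % p = p - 1) :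
    phiNat p n = phiNat p (n / p) := by
  rw [phiNat, phi_of_eq (by rwa [digitSeq_zero]) (exists_digitSeq_ne hp n)]
  simp only [digitSeq_succ, phiNat]

lemma phiNat_le (hp : 2 ≤ p) (n : ℕ) : phiNat p n ≤ p - 2 := by
  have hne : digitSeq p n (firstNot p (digitSeq p n)) ≠ p - 1 :=
    Nat.sInf_mem (exists_digitSeq_ne hp n)
  have hlt : digitSeq p n (firstNot p (digitSeq p n)) < p := Nat.mod_lt _ (by omega)
  rw [phiNat, phi]
  omega

noncomputable def phiNatSum (p a m : ℕ) : ℕ := ∑ t ∈ Finset.range m, phiNat p (a + t)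

lemma phiSum_digitSeq (hp : 2 ≤ p) (a m : ℕ) :
    phiSum p m (digitSeq p a) = phiNatSum p a m := by
  simp only [phiSum, phiNatSum, iterate_odo_digitSeq hp, phiNat]

lemma phiNatSum_succ (a m : ℕ) : phiNatSum p a (m + 1) = phiNatSum p a m + phiNat p (a + m) :=
  Finset.sum_range_succ _ _

def dropTop (p c : ℕ) : ℕ := if c = p - 1 then 0 else c

def lowDigitSum (p a n : ℕ) : ℕ := ∑ t ∈ Finset.range n, dropTop p ((a + t) % p)

lemma lowDigitSum_succ (a n : ℕ) :
    lowDigitSum p a (n + 1) = lowDigitSum p a n + dropTop p ((a + n) % p) :=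
  Finset.sum_range_succ _ _

lemma lowDigitSum_add (a n₁ n₂ : ℕ) :
    lowDigitSum p a (n₁ + n₂) = lowDigitSum p a n₁ + lowDigitSum p (a + n₁) n₂ := by
  simp only [lowDigitSum, Finset.sum_range_add, Nat.add_assoc]

lemma lowDigitSum_mod (a n : ℕ) : lowDigitSum p (a % p) n = lowDigitSum p a n := by
  simp only [lowDigitSum, Nat.mod_add_mod]

/-- Each `t` with last digit `(a + t) % p ≠ p - 1` contributes that digit to `φ`; the others
carry, contribute `φ` of `(a + t) / p`, and run exactly once through `[a / p, (a + n) / p)`. -/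
lemma phiNatSum_eq_lowDigitSum_add (hp : 2 ≤ p) (a n : ℕ) :
    phiNatSum p a n = lowDigitSum p a n + phiNatSum p (a / p) ((a + n) / p - a / p) := by
  induction n with
  | zero => simp [phiNatSum, lowDigitSum]
  | succ n ih =>
    have hle : a / p ≤ (a + n) / p := Nat.div_le_div_right (by omega)
    rw [phiNatSum_succ, lowDigitSum_succ, ih, ← Nat.add_assoc a n 1]
    by_cases h : (a + n) % p = p - 1
    · rw [(succ_div_mod_of_mod_eq (by omega) h).1, Nat.sub_add_comm hle, phiNatSum_succ,
        Nat.add_sub_cancel' hle, phiNat_of_mod_eq hp h, dropTop, if_pos h]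
      ring
    · rw [(succ_div_mod_of_mod_ne (by omega) h).1, phiNat_of_mod_ne h, dropTop, if_neg h]
      ring

lemma lowDigitSum_period (hp : 0 < p) (a : ℕ) : lowDigitSum p a p = lowDigitSum p 0 p := by
  have hr : a % p < p := Nat.mod_lt a hp
  calc lowDigitSum p a p = lowDigitSum p (a % p) ((p - a % p) + a % p) := by
        rw [lowDigitSum_mod, Nat.sub_add_cancel hr.le]
    _ = lowDigitSum p 0 (a % p + (p - a % p)) := by
        rw [lowDigitSum_add, lowDigitSum_add, Nat.add_sub_cancel' hr.le, Nat.zero_add,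
          ← lowDigitSum_mod (a := p), Nat.mod_self, Nat.add_comm]
    _ = lowDigitSum p 0 p := by rw [Nat.add_sub_cancel' hr.le]

lemma lowDigitSum_mul_add (hp : 0 < p) (a m k : ℕ) :
    lowDigitSum p a (p * m + k) = m * lowDigitSum p 0 p + lowDigitSum p (a % p) k := by
  induction m generalizing a with
  | zero => simp [lowDigitSum_mod]
  | succ m ih =>
    rw [show p * (m + 1) + k = p + (p * m + k) by ring, lowDigitSum_add, ih,
      lowDigitSum_period hp, Nat.add_mod_right]
    ring

lemma phiNatSum_mul_add (hp : 2 ≤ p) (a m k : ℕ) :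
    phiNatSum p a (p * m + k) = m * lowDigitSum p 0 p + lowDigitSum p (a % p) k
      + phiNatSum p (a / p) (m + (a % p + k) / p) := by
  have hdiv : (a + (p * m + k)) / p = a / p + m + (a % p + k) / p := by
    conv_lhs => rw [← Nat.div_add_mod a p]
    rw [show p * (a / p) + a % p + (p * m + k) = (a % p + k) + p * (a / p + m) by ring,
      Nat.add_mul_div_left _ _ (by omega)]
    ring
  rw [phiNatSum_eq_lowDigitSum_add hp, lowDigitSum_mul_add (by omega), hdiv,
    Nat.add_assoc (a / p), Nat.add_sub_cancel_left]

noncomputable def maxPhiNatSum (p m : ℕ) : ℕ := sSup (Set.range fun a => phiNatSum p a m)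

lemma bddAbove_range_phiNatSum (hp : 2 ≤ p) (m : ℕ) :
    BddAbove (Set.range fun a => phiNatSum p a m) := by
  refine ⟨m * (p - 2), ?_⟩
  rintro _ ⟨a, rfl⟩
  calc phiNatSum p a m ≤ ∑ _t ∈ Finset.range m, (p - 2) :=
        Finset.sum_le_sum fun t _ => phiNat_le hp _
    _ = m * (p - 2) := by simp

lemma phiNatSum_le_maxPhiNatSum (hp : 2 ≤ p) (a m : ℕ) : phiNatSum p a m ≤ maxPhiNatSum p m :=
  le_csSup (bddAbove_range_phiNatSum hp m) ⟨a, rfl⟩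

lemma maxPhiNatSum_le {m c : ℕ} (h : ∀ a, phiNatSum p a m ≤ c) : maxPhiNatSum p m ≤ c :=
  csSup_le (Set.range_nonempty _) (by rintro _ ⟨a, rfl⟩; exact h a)

lemma exists_phiNatSum_eq_maxPhiNatSum (hp : 2 ≤ p) (m : ℕ) :
    ∃ a, phiNatSum p a m = maxPhiNatSum p m :=
  Nat.sSup_mem (Set.range_nonempty _) (bddAbove_range_phiNatSum hp m)

noncomputable def maxPhiNatSumIncr (p m : ℕ) : ℕ := maxPhiNatSum p (m + 1) - maxPhiNatSum p m

lemma maxPhiNatSum_succ (hp : 2 ≤ p) (m : ℕ) :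
    maxPhiNatSum p (m + 1) = maxPhiNatSum p m + maxPhiNatSumIncr p m := by
  have : maxPhiNatSum p m ≤ maxPhiNatSum p (m + 1) := maxPhiNatSum_le fun a =>
    (phiNatSum_succ a m ▸ Nat.le_add_right _ _).trans (phiNatSum_le_maxPhiNatSum hp a _)
  rw [maxPhiNatSumIncr]
  omega

lemma maxPhiNatSumIncr_le (hp : 2 ≤ p) (m : ℕ) : maxPhiNatSumIncr p m ≤ p - 2 := by
  have : maxPhiNatSum p (m + 1) ≤ maxPhiNatSum p m + (p - 2) := maxPhiNatSum_le fun a => by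
    rw [phiNatSum_succ]
    exact Nat.add_le_add (phiNatSum_le_maxPhiNatSum hp a m) (phiNat_le hp _)
  rw [maxPhiNatSumIncr]
  omega

lemma maxPhiNatSum_mul_add_eq_sup (hp : 2 ≤ p) (m k : ℕ) :
    maxPhiNatSum p (p * m + k) = m * lowDigitSum p 0 p +
      (Finset.range p).sup fun r => lowDigitSum p r k + maxPhiNatSum p (m + (r + k) / p) := by
  apply le_antisymm
  · refine maxPhiNatSum_le fun a => ?_
    rw [phiNatSum_mul_add hp, Nat.add_assoc]
    refine Nat.add_le_add_left (Finset.le_sup_of_le (Finset.mem_range.2 (Nat.mod_lt a ?_))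
      (Nat.add_le_add_left (phiNatSum_le_maxPhiNatSum hp _ _) _)) _
    omega
  · obtain ⟨r, hr, hsup⟩ := Finset.exists_mem_eq_sup (Finset.range p)
      ⟨0, Finset.mem_range.2 (by omega)⟩
      fun r => lowDigitSum p r k + maxPhiNatSum p (m + (r + k) / p)
    obtain ⟨b, hb⟩ := exists_phiNatSum_eq_maxPhiNatSum hp (m + (r + k) / p)
    have hr : r < p := Finset.mem_range.1 hr
    have hdiv : (r + p * b) / p = b ∧ (r + p * b) % p = r :=
      (Nat.div_mod_unique (by omega)).2 ⟨rfl, hr⟩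
    have key := phiNatSum_mul_add hp (r + p * b) m k
    rw [hdiv.1, hdiv.2, hb, Nat.add_assoc] at key
    rw [hsup, ← key]
    exact phiNatSum_le_maxPhiNatSum hp _ _

/-- `R_k(s)`: a window of length `p * m + k` starting at residue `r` carries into the next digit
`m + 1` rather than `m` times exactly when `p ≤ r + k`, and the extra carry gains `s = S_m`. -/
def residueMax (p k s : ℕ) : ℕ :=
  (Finset.range p).sup fun r => lowDigitSum p r k + if p ≤ r + k then s else 0

lemma maxPhiNatSum_mul_add (hp : 2 ≤ p) (m : ℕ) {k : ℕ} (hk : k ≤ p) :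
    maxPhiNatSum p (p * m + k) =
      m * lowDigitSum p 0 p + maxPhiNatSum p m + residueMax p k (maxPhiNatSumIncr p m) := by
  have hterm : ∀ r ∈ Finset.range p, lowDigitSum p r k + maxPhiNatSum p (m + (r + k) / p) =
      (lowDigitSum p r k + if p ≤ r + k then maxPhiNatSumIncr p m else 0) + maxPhiNatSum p m := by
    intro r hr
    have hr : r < p := Finset.mem_range.1 hr
    by_cases h : p ≤ r + k
    · rw [Nat.div_eq_of_lt_le (k := 1) (by omega) (by omega), if_pos h, maxPhiNatSum_succ hp]
      ring
    · rw [Nat.div_eq_of_lt (by omega), if_neg h, Nat.add_zero, Nat.add_zero]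
  rw [maxPhiNatSum_mul_add_eq_sup hp, Finset.sup_congr rfl hterm,
    ← Finset.sup_add ⟨0, Finset.mem_range.2 (by omega)⟩, residueMax]
  ring

lemma maxPhiNatSumIncr_mul_add (hp : 2 ≤ p) (m : ℕ) {k : ℕ} (hk : k < p) :
    maxPhiNatSumIncr p (p * m + k) = residueMax p (k + 1) (maxPhiNatSumIncr p m)
      - residueMax p k (maxPhiNatSumIncr p m) := by
  have h := maxPhiNatSum_succ hp (p * m + k)
  rw [Nat.add_assoc, maxPhiNatSum_mul_add hp m (show k + 1 ≤ p from hk),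
    maxPhiNatSum_mul_add hp m hk.le] at h
  omega

lemma maxPhiNatSumIncr_zero (hp : 2 ≤ p) : maxPhiNatSumIncr p 0 = p - 2 := by
  have h0 : maxPhiNatSum p 0 = 0 :=
    Nat.eq_zero_of_le_zero (maxPhiNatSum_le fun a => by simp [phiNatSum])
  have h1 : maxPhiNatSum p 1 = p - 2 := by
    refine le_antisymm (maxPhiNatSum_le fun a => by simpa [phiNatSum] using phiNat_le hp a) ?_
    have hmod : (p - 2) % p = p - 2 := Nat.mod_eq_of_lt (by omega)
    have : phiNatSum p (p - 2) 1 = p - 2 := by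
      rw [phiNatSum, Finset.sum_range_one, Nat.add_zero, phiNat_of_mod_ne (by omega), hmod]
    exact this ▸ phiNatSum_le_maxPhiNatSum hp _ _
  rw [maxPhiNatSumIncr, h0, h1, Nat.sub_zero]

lemma dropTop_le {c : ℕ} (hc : c < p) : dropTop p c ≤ p - 2 := by
  unfold dropTop
  split_ifs <;> omega

lemma lowDigitSum_of_add_le {a n : ℕ} (h : a + n ≤ p - 1) :
    lowDigitSum p a n = ∑ c ∈ Finset.Ico a (a + n), c := by
  rw [lowDigitSum, Finset.sum_Ico_eq_sum_range, Nat.add_sub_cancel_left]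
  refine Finset.sum_congr rfl fun t ht => ?_
  have ht := Finset.mem_range.1 ht
  rw [Nat.mod_eq_of_lt (by omega), dropTop, if_neg (by omega)]

lemma lowDigitSum_sub_self {j : ℕ} (hj1 : 1 ≤ j) (hj : j ≤ p) :
    lowDigitSum p (p - j) j = ∑ c ∈ Finset.Ico (p - j) (p - 1), c := by
  obtain ⟨i, rfl⟩ : ∃ i, j = i + 1 := ⟨j - 1, by omega⟩
  rw [lowDigitSum_succ, lowDigitSum_of_add_le (by omega), show p - (i + 1) + i = p - 1 by omega,
    Nat.mod_eq_of_lt (by omega), dropTop, if_pos rfl, Nat.add_zero]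

lemma sum_Ico_add_le_sum_Ico_add {a b : ℕ} (h : a ≤ b) (n : ℕ) :
    ∑ c ∈ Finset.Ico a (a + n), c ≤ ∑ c ∈ Finset.Ico b (b + n), c := by
  simp only [Finset.sum_Ico_eq_sum_range, Nat.add_sub_cancel_left]
  exact Finset.sum_le_sum fun t _ => Nat.add_le_add_right h t

lemma lowDigitSum_add_ite_le (hp : 2 ≤ p) {r j : ℕ} (hr : r < p) (hj1 : 1 ≤ j) (hj : j ≤ p) :
    lowDigitSum p r j + (if p ≤ r + j then p - 2 else 0)
      ≤ (p - 2) + ∑ c ∈ Finset.Ico (p - j) (p - 1), c := by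
  split_ifs with h
  · have hhead : lowDigitSum p r (p - r) = ∑ c ∈ Finset.Ico r (p - 1), c := by
      have := lowDigitSum_sub_self (p := p) (j := p - r) (by omega) (by omega)
      rwa [Nat.sub_sub_self hr.le] at this
    have htail : lowDigitSum p (r + (p - r)) (r + j - p) ≤ ∑ c ∈ Finset.Ico (p - j) r, c := by
      rw [← lowDigitSum_mod, Nat.add_sub_cancel' hr.le, Nat.mod_self,
        lowDigitSum_of_add_le (by omega)]
      have := sum_Ico_add_le_sum_Ico_add (Nat.zero_le (p - j)) (r + j - p)
      rwa [show p - j + (r + j - p) = r by omega] at this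
    have hsplit : lowDigitSum p r j
        = lowDigitSum p r (p - r) + lowDigitSum p (r + (p - r)) (r + j - p) := by
      rw [← lowDigitSum_add, show p - r + (r + j - p) = j by omega]
    have := Finset.sum_Ico_consecutive (fun c => c) (show p - j ≤ r by omega)
      (show r ≤ p - 1 by omega)
    omega
  · obtain ⟨i, rfl⟩ : ∃ i, j = i + 1 := ⟨j - 1, by omega⟩
    have hsum := sum_Ico_add_le_sum_Ico_add (show r ≤ p - (i + 1) by omega) i
    rw [show p - (i + 1) + i = p - 1 by omega] at hsum
    rw [lowDigitSum_succ, lowDigitSum_of_add_le (by omega)]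
    have := dropTop_le (Nat.mod_lt (r + i) (show 0 < p by omega))
    omega

lemma residueMax_eq (hp : 2 ≤ p) {j : ℕ} (hj1 : 1 ≤ j) (hj : j ≤ p) :
    residueMax p j (p - 2) = (p - 2) + ∑ c ∈ Finset.Ico (p - j) (p - 1), c := by
  refine le_antisymm
    (Finset.sup_le fun r hr => lowDigitSum_add_ite_le hp (Finset.mem_range.1 hr) hj1 hj) ?_
  refine Finset.le_sup_of_le (Finset.mem_range.2 (show p - j < p by omega)) ?_
  rw [lowDigitSum_sub_self hj1 hj, if_pos (by omega), Nat.add_comm]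

lemma maxPhiNatSumIncr_of_pos_of_lt (hp : 2 ≤ p) {j : ℕ} (hj1 : 1 ≤ j) (hj : j < p) :
    maxPhiNatSumIncr p j = p - 1 - j := by
  have h := maxPhiNatSumIncr_mul_add hp 0 hj
  rw [Nat.mul_zero, Nat.zero_add, maxPhiNatSumIncr_zero hp, residueMax_eq hp (by omega) hj,
    residueMax_eq hp hj1 hj.le,
    Finset.sum_eq_sum_Ico_succ_bot (show p - (j + 1) < p - 1 by omega),
    show p - (j + 1) + 1 = p - j by omega] at h
  omega

lemma maxPhiNatSumIncr_sub_one_sub (hp : 2 ≤ p) (m : ℕ) :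
    maxPhiNatSumIncr p (p - 1 - maxPhiNatSumIncr p m) = maxPhiNatSumIncr p m := by
  have := maxPhiNatSumIncr_le hp m
  rw [maxPhiNatSumIncr_of_pos_of_lt hp (by omega) (by omega)]
  omega

lemma phiSum_succ (m : ℕ) (x : ℕ → ℕ) :
    phiSum p (m + 1) x = phi p x + phiSum p m (odo p x) := by
  simp only [phiSum, Finset.sum_range_succ', Function.iterate_succ_apply,
    Function.iterate_zero_apply, Nat.add_comm]

section Locality

variable {L : ℕ} {x y : ℕ → ℕ}

lemma firstNot_eq_of_eqOn (hxy : ∀ j < L, x j = y j) (hy : ∃ j < L, y j ≠ p - 1) :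
    firstNot p x = firstNot p y ∧ firstNot p y < L := by
  obtain ⟨j, hjL, hj⟩ := hy
  have hfy : firstNot p y < L := (Nat.sInf_le hj).trans_lt hjL
  have hxf : x (firstNot p y) ≠ p - 1 := by
    rw [hxy _ hfy]
    exact Nat.sInf_mem (s := {i | y i ≠ p - 1}) ⟨j, hj⟩
  have hfx : firstNot p x ≤ firstNot p y := Nat.sInf_le hxf
  have hyx : y (firstNot p x) ≠ p - 1 := by
    rw [← hxy _ (hfx.trans_lt hfy)]
    exact Nat.sInf_mem (s := {i | x i ≠ p - 1}) ⟨_, hxf⟩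
  exact ⟨le_antisymm hfx (Nat.sInf_le hyx), hfy⟩

lemma phi_eq_of_eqOn (hxy : ∀ j < L, x j = y j) (hy : ∃ j < L, y j ≠ p - 1) :
    phi p x = phi p y := by
  obtain ⟨hf, hfL⟩ := firstNot_eq_of_eqOn hxy hy
  rw [phi, phi, hf, hxy _ hfL]

lemma odo_eq_of_eqOn (hxy : ∀ j < L, x j = y j) (hy : ∃ j < L, y j ≠ p - 1) :
    ∀ j < L, odo p x j = odo p y j := by
  intro j hj
  simp only [odo, (firstNot_eq_of_eqOn hxy hy).1, hxy j hj]

lemma phiSum_eq_of_eqOn (m : ℕ) (hxy : ∀ j < L, x j = y j)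
    (hy : ∀ t < m, ∃ j < L, (odo p)^[t] y j ≠ p - 1) : phiSum p m x = phiSum p m y := by
  induction m generalizing x y with
  | zero => rfl
  | succ m ih =>
    have hy0 := hy 0 m.succ_pos
    rw [phiSum_succ, phiSum_succ, phi_eq_of_eqOn hxy hy0,
      ih (odo_eq_of_eqOn hxy hy0) fun t ht => hy (t + 1) (by omega)]

end Locality

lemma exists_digitSeq_ne_of_lt (hp : 2 ≤ p) {L n : ℕ} (h : n + 1 < p ^ L) :
    ∃ j < L, digitSeq p n j ≠ p - 1 := by
  induction L generalizing n with
  | zero => simp at h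
  | succ L ih =>
    by_cases hn : n % p = p - 1
    · have hn1 : n + 1 = p * (n / p + 1) := by
        have := Nat.div_add_mod n p
        rw [Nat.mul_add]
        omega
      rw [hn1, pow_succ'] at h
      obtain ⟨j, hj, hne⟩ := ih (Nat.lt_of_mul_lt_mul_left h)
      exact ⟨j + 1, by omega, by rwa [digitSeq_succ]⟩
    · exact ⟨0, L.succ_pos, by rwa [digitSeq_zero]⟩

lemma phiSum_eq_phiNatSum (hp : 2 ≤ p) {x : ℕ → ℕ} {a L m : ℕ}
    (hx : ∀ j < L, x j = digitSeq p a j) (h : a + m < p ^ L) : phiSum p m x = phiNatSum p a m := by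
  rw [phiSum_eq_of_eqOn m hx fun t ht => ?_, phiSum_digitSeq hp]
  rw [iterate_odo_digitSeq hp]
  exact exists_digitSeq_ne_of_lt hp (by omega)

def ofDigitSeq (p : ℕ) (d : ℕ → ℕ) (N : ℕ) : ℕ := ∑ j ∈ Finset.range N, d j * p ^ j

lemma ofDigitSeq_succ (d : ℕ → ℕ) (N : ℕ) :
    ofDigitSeq p d (N + 1) = ofDigitSeq p d N + d N * p ^ N :=
  Finset.sum_range_succ _ _

lemma ofDigitSeq_succ' (d : ℕ → ℕ) (N : ℕ) :
    ofDigitSeq p d (N + 1) = d 0 + p * ofDigitSeq p (fun j => d (j + 1)) N := by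
  rw [ofDigitSeq, ofDigitSeq, Finset.sum_range_succ', Finset.mul_sum, Nat.add_comm]
  simp only [pow_zero, Nat.mul_one, pow_succ]
  exact congrArg _ (Finset.sum_congr rfl fun j _ => by ring)

section OfDigitSeq

variable {d : ℕ → ℕ}

lemma ofDigitSeq_lt {N : ℕ} (hd : ∀ j < N, d j < p) : ofDigitSeq p d N < p ^ N := by
  induction N with
  | zero => simp [ofDigitSeq]
  | succ N ih =>
    have h1 := ih fun j hj => hd j (by omega)
    have h2 : (d N + 1) * p ^ N ≤ p * p ^ N := Nat.mul_le_mul_right _ (hd N N.lt_succ_self)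
    rw [ofDigitSeq_succ, pow_succ']
    nlinarith

lemma digitSeq_ofDigitSeq {N : ℕ} (hd : ∀ j < N, d j < p) {j : ℕ} (hj : j < N) :
    digitSeq p (ofDigitSeq p d N) j = d j := by
  induction N generalizing d j with
  | zero => omega
  | succ N ih =>
    have hdiv := (Nat.div_mod_unique (b := p) (a := ofDigitSeq p d (N + 1)) (by
      have := hd 0 (by omega); omega)).2 ⟨(ofDigitSeq_succ' d N).symm, hd 0 (by omega)⟩
    rcases j with _ | j
    · rw [digitSeq_zero, hdiv.2]
    · rw [digitSeq_succ, hdiv.1, ih (fun j hj => hd (j + 1) (by omega)) (by omega)]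

end OfDigitSeq

lemma digitsOf_eq_floor_mod (u : ℝ) (i : ℕ) : digitsOf p u i = ⌊u * p ^ (i + 1)⌋₊ % p := by
  rw [digitsOf, Int.floor_toNat]

lemma floor_mul_pow_div_pow (hp : 0 < p) (u : ℝ) {i N : ℕ} (h : i ≤ N) :
    ⌊u * p ^ N⌋₊ / p ^ (N - i) = ⌊u * p ^ i⌋₊ := by
  have hpow : (p : ℝ) ^ N = p ^ i * p ^ (N - i) := by rw [← pow_add, Nat.add_sub_cancel' h]
  rw [← Nat.floor_div_natCast, Nat.cast_pow, hpow, ← mul_assoc,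
    mul_div_cancel_right₀ _ (pow_ne_zero _ (by positivity))]

lemma digitsOf_eq_digitSeq_floor (hp : 0 < p) (u : ℝ) {i N : ℕ} (hi : i < N) :
    digitsOf p u i = digitSeq p ⌊u * p ^ N⌋₊ (N - 1 - i) := by
  rw [digitsOf_eq_floor_mod, digitSeq, show N - 1 - i = N - (i + 1) by omega,
    floor_mul_pow_div_pow hp u hi]

lemma exists_digitsOf_ne (hp : 2 ≤ p) {u : ℝ} (hu : 0 ≤ u) (L : ℕ) :
    ∃ i, L ≤ i ∧ digitsOf p u i ≠ p - 1 := by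
  by_contra! h
  -- Otherwise `⌊u p^(L+t)⌋ + 1 = p^t (⌊u p^L⌋ + 1)`, so `p^t ε ≤ 1` for all `t`,
  -- where `ε = ⌊u p^L⌋ + 1 - u p^L > 0`.
  set f : ℕ → ℕ := fun i => ⌊u * p ^ i⌋₊
  have hstep : ∀ i, L ≤ i → f (i + 1) + 1 = p * (f i + 1) := by
    intro i hi
    have hmod : f (i + 1) % p = p - 1 := by rw [← digitsOf_eq_floor_mod]; exact h i hi
    have hdiv : f (i + 1) / p = f i := by
      simpa using floor_mul_pow_div_pow (by omega) u (Nat.le_succ i)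
    have := Nat.div_add_mod (f (i + 1)) p
    rw [hdiv, hmod] at this
    rw [Nat.mul_add]
    omega
  have hpow : ∀ t, f (L + t) + 1 = p ^ t * (f L + 1) := by
    intro t
    induction t with
    | zero => simp
    | succ t ih => rw [← Nat.add_assoc, hstep _ (by omega), ih, pow_succ', Nat.mul_assoc]
  set ε : ℝ := f L + 1 - u * p ^ L with hε
  have hε0 : 0 < ε := by
    have := Nat.lt_floor_add_one (u * p ^ L)
    rw [hε]
    linarith
  obtain ⟨t, ht⟩ := pow_unbounded_of_one_lt (1 / ε) (by exact_mod_cast hp : (1 : ℝ) < p)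
  have hfloor : (f (L + t) : ℝ) ≤ u * p ^ L * p ^ t := by
    rw [mul_assoc, ← pow_add]
    exact Nat.floor_le (by positivity)
  have hcast : (f (L + t) : ℝ) + 1 = (p : ℝ) ^ t * (f L + 1) := by exact_mod_cast hpow t
  rw [div_lt_iff₀ hε0] at ht
  nlinarith

lemma digitsOf_mem_gammaStar (hp : 2 ≤ p) {u : ℝ} (hu : 0 ≤ u) :
    digitsOf p u ∈ GammaStar p := by
  refine ⟨fun i => Nat.mod_lt _ (by omega), Set.infinite_iff_exists_gt.2 fun L => ?_⟩
  obtain ⟨i, hi, hne⟩ := exists_digitsOf_ne hp hu (L + 1)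
  exact ⟨i, hne, by omega⟩

lemma exists_phiSum_eq_phiNatSum (hp : 2 ≤ p) {x : ℕ → ℕ} (hx : x ∈ GammaStar p)
    (m : ℕ) : ∃ a, phiSum p m x = phiNatSum p a m := by
  obtain ⟨i, hi, hmi⟩ := hx.2.exists_gt m
  have hxi : x i ≤ p - 2 := by
    have := hx.1 i
    have : x i ≠ p - 1 := hi
    omega
  have hlow := ofDigitSeq_lt (N := i) fun j _ => hx.1 j
  have htop : (x i + 2) * p ^ i ≤ p * p ^ i := Nat.mul_le_mul_right _ (by omega)
  have hm : m < p ^ i := hmi.trans (Nat.lt_pow_self (by omega))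
  refine ⟨ofDigitSeq p x (i + 1), phiSum_eq_phiNatSum hp
    (fun j hj => (digitSeq_ofDigitSeq (fun j _ => hx.1 j) hj).symm) ?_⟩
  rw [ofDigitSeq_succ, pow_succ']
  nlinarith

lemma measurableSet_gammaStar : MeasurableSet (GammaStar p) := by
  simp_rw [GammaStar, Set.infinite_iff_exists_gt]
  measurability

lemma measurable_digitsOf : Measurable (digitsOf p) :=
  measurable_pi_lambda _ fun _ => (measurable_of_countable fun z : ℤ => z.toNat % p).comp
    (measurable_id.mul_const _).floor

lemma lam_compl_gammaStar (hp : 2 ≤ p) : lam p (GammaStar p)ᶜ = 0 := by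
  rw [lam, Measure.map_apply measurable_digitsOf measurableSet_gammaStar.compl,
    Measure.restrict_apply' measurableSet_Ico]
  refine measure_mono_null (fun u hu => ?_) measure_empty
  exact hu.1 (digitsOf_mem_gammaStar hp hu.2.1)

lemma pim_phiNatSum_ne_zero (hp : 2 ≤ p) (a m : ℕ) : pim p m (phiNatSum p a m) ≠ 0 := by
  set L := a + m + 1
  have haL : a + m < p ^ L := (Nat.lt_pow_self (by omega)).trans' (Nat.lt_succ_self _)
  -- `digitsOf` reads the most significant digit first, so `c` lists the first `L` digits of `a`
  -- in reverse order.
  set c := ofDigitSeq p (fun i => digitSeq p a (L - 1 - i)) L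
  have hdig : ∀ i < L, digitSeq p c i = digitSeq p a (L - 1 - i) :=
    fun i => digitSeq_ofDigitSeq fun j _ => Nat.mod_lt _ (by omega)
  have hc : c < p ^ L := ofDigitSeq_lt fun j _ => Nat.mod_lt _ (by omega)
  have hpL : (0 : ℝ) < (p : ℝ) ^ L := by positivity
  set I := Set.Ico ((c : ℝ) / p ^ L) ((c + 1) / p ^ L)
  have hI : I ⊆ digitsOf p ⁻¹' {x | phiSum p m x = phiNatSum p a m} ∩ Set.Ico 0 1 := by
    rintro u ⟨hu1, hu2⟩
    have hu0 : 0 ≤ u := (by positivity : (0 : ℝ) ≤ c / p ^ L).trans hu1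
    have hfloor : ⌊u * p ^ L⌋₊ = c := by
      rw [Nat.floor_eq_iff (by positivity), ← div_le_iff₀ hpL, ← lt_div_iff₀ hpL]
      exact ⟨hu1, hu2⟩
    refine ⟨phiSum_eq_phiNatSum hp (fun j hj => ?_) haL, hu0, hu2.trans_le ?_⟩
    · rw [digitsOf_eq_digitSeq_floor (by omega) u hj, hfloor, hdig _ (by omega),
        show L - 1 - (L - 1 - j) = j by omega]
    · rw [div_le_one hpL]
      exact_mod_cast hc
  have hIpos : volume I ≠ 0 := by
    rw [Real.volume_Ico, ← sub_div, add_sub_cancel_left, ENNReal.ofReal_ne_zero_iff]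
    positivity
  refine fun h0 => hIpos (measure_mono_null hI ?_)
  rw [← Measure.restrict_apply' measurableSet_Ico]
  exact le_antisymm (h0 ▸ Measure.le_map_apply measurable_digitsOf.aemeasurable _) zero_le

lemma pim_ne_zero_iff (hp : 2 ≤ p) (m j : ℕ) :
    pim p m j ≠ 0 ↔ ∃ a, phiNatSum p a m = j := by
  refine ⟨fun h => ?_, fun ⟨a, ha⟩ => ha ▸ pim_phiNatSum_ne_zero hp a m⟩
  by_contra! hne
  have hsub : {x | phiSum p m x = j} ⊆ (GammaStar p)ᶜ := fun x hx hxΓ => by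
    obtain ⟨a, ha⟩ := exists_phiSum_eq_phiNatSum hp hxΓ m
    exact hne a (ha ▸ hx)
  exact h (measure_mono_null hsub (lam_compl_gammaStar hp))

lemma D_eq_maxPhiNatSum (hp : 2 ≤ p) (m : ℕ) : D p m = maxPhiNatSum p m :=
  congrArg sSup (Set.ext fun j => pim_ne_zero_iff hp m j)

lemma Sseq_eq_maxPhiNatSumIncr (hp : 2 ≤ p) (m : ℕ) : Sseq p m = maxPhiNatSumIncr p m := by
  rw [Sseq, maxPhiNatSumIncr, D_eq_maxPhiNatSum hp, D_eq_maxPhiNatSum hp]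

end

theorem statement_14_general (p : ℕ) (hp : 3 ≤ p) (m k : ℕ) (hk : k < p - 1) :
    Sseq p (p * m + k) = Sseq p (p * (p - 1 - Sseq p m) + k) := by
  have hp2 : 2 ≤ p := by omega
  simp only [Sseq_eq_maxPhiNatSumIncr hp2]
  rw [maxPhiNatSumIncr_mul_add hp2 _ (by omega), maxPhiNatSumIncr_mul_add hp2 _ (by omega),
    maxPhiNatSumIncr_sub_one_sub hp2]

/-- with `S_m = D_{m+1} - D_m`, for every `m ≥ p` and `0 < k < p-1`,
`S_{pm+k} = S_{p(p-1-S_m)+k}`. -/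
theorem statement_14 (p : ℕ) (hp : 3 ≤ p) (m k : ℕ) (hm : p ≤ m)
    (hk0 : 0 < k) (hk : k < p - 1) :
    Sseq p (p * m + k) = Sseq p (p * (p - 1 - Sseq p m) + k) :=
  statement_14_general p hp m k hk

end Chacon
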